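/- If σ = {ρ(x)x : x ∈ Ω̄} is a reflector in the class A(δ), then the Harnack-type inequality sup_{x ∈ Ω̄} ρ(x) ≤ ((1 + c_δ)/(1 − c_δ)) · inf_{x ∈ Ω̄} ρ(x) holds. -/

import Mathlib

noncomputable section

open MeasureTheory Metric Set Filter Topology
attribute [local instance] Classical.propDecidable

/-- Real inner product on `ℝ³`. -/
noncomputable def rinner (x y : EuclideanSpace ℝ (Fin 3)) : ℝ := inner ℝ x y

/-- Euclidean 3-space. -/
abbrev E3 : Type := EuclideanSpace ℝ (Fin 3)

/-- The unit sphere `S²` in `ℝ³`. -/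
def sphere2 : Set E3 := Metric.sphere (0 : E3) 1

/-- Unit vector `m = P/OP` in the direction of `P`. -/
noncomputable def axisDir (P : E3) : E3 := ‖P‖⁻¹ • P

/-- Eccentricity `ε = √(1 + d²/OP²) − d/OP` of the ellipsoid `E_d(P)`. -/
noncomputable def ecc (P : E3) (d : ℝ) : ℝ :=
  Real.sqrt (1 + d ^ 2 / ‖P‖ ^ 2) - d / ‖P‖

/-- Polar radius `ρ_d(x) = d/(1 − ε x·m)` of the ellipsoid `E_d(P)`. -/
noncomputable def polarRadius (P : E3) (d : ℝ) (x : E3) : ℝ :=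
  d / (1 - ecc P d * rinner x (axisDir P))

/-- The constant `c_δ = √(1 + δ²) − δ`. -/
noncomputable def cconst (δ : ℝ) : ℝ := Real.sqrt (1 + δ ^ 2) - δ

/-- Outer unit normal `(x − εm)/|x − εm|` of the ellipsoid `E_d(P)` at the point `ρ_d(x)x`. -/
noncomputable def normalVec (P : E3) (d : ℝ) (x : E3) : E3 :=
  ‖x - ecc P d • axisDir P‖⁻¹ • (x - ecc P d • axisDir P)

/-- The ellipsoid `E_d(P)` supports the surface `{ρ(x)x : x ∈ closure Ω}` at `ρ(x₀)x₀`. -/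
def IsSupportingAt (Ω : Set E3) (ρ : E3 → ℝ) (P : E3) (d : ℝ) (x₀ : E3) : Prop :=
  P ≠ 0 ∧ 0 < d ∧ (∀ x ∈ closure Ω, ρ x ≤ polarRadius P d x) ∧
    ρ x₀ = polarRadius P d x₀

/-- `{ρ(x)x : x ∈ closure Ω}` is a reflector from `closure Ω` to the target `D`. -/
def IsReflector (Ω D : Set E3) (ρ : E3 → ℝ) : Prop :=
  (∀ x ∈ closure Ω, 0 < ρ x) ∧
  ∀ x₀ ∈ closure Ω, ∃ P ∈ D, ∃ d : ℝ, IsSupportingAt Ω ρ P d x₀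

/-- Tracing set `τ_σ(E)`: directions reflected into `E`. -/
def tracing (Ω : Set E3) (ρ : E3 → ℝ) (E : Set E3) : Set E3 :=
  {x | x ∈ closure Ω ∧ ∃ P ∈ E, ∃ d : ℝ, IsSupportingAt Ω ρ P d x}

/-- The class `A(δ)`: reflectors all of whose points admit a supporting ellipsoid with
`d ≥ δ M`. -/
def InClassA (Ω D : Set E3) (ρ : E3 → ℝ) (δ M : ℝ) : Prop :=
  IsReflector Ω D ρ ∧
  ∀ x₀ ∈ closure Ω, ∃ P ∈ D, ∃ d : ℝ, δ * M ≤ d ∧ IsSupportingAt Ω ρ P d x₀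

/-- The boundary `∂Ω` of `Ω` relative to the sphere `S²`. -/
def sphFrontier (Ω : Set E3) : Set E3 := closure Ω ∩ closure (sphere2 \ Ω)

/-- `D` is contained in a plane of `ℝ³`. -/
def InPlane (D : Set E3) : Prop :=
  ∃ v : E3, v ≠ 0 ∧ ∃ c : ℝ, ∀ P ∈ D, rinner P v = c

/-- The set `S` of directions traced to two distinct target points. -/
def ambigSet (Ω D : Set E3) (ρ : E3 → ℝ) : Set E3 :=
  {x | x ∈ closure Ω ∧ ∃ P₁ ∈ D, ∃ P₂ ∈ D, P₁ ≠ P₂ ∧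
    x ∈ tracing Ω ρ {P₁} ∧ x ∈ tracing Ω ρ {P₂}}

/-- A canonical selection of the outer unit normal `ν(x)` of the reflector; at every point
where the supporting ellipsoid is unique (a.e. point) this is the normal of the
supporting ellipsoid. -/
noncomputable def nuSel (Ω D : Set E3) (ρ : E3 → ℝ) (x : E3) : E3 :=
  if h : ∃ p : E3 × ℝ, p.1 ∈ D ∧ IsSupportingAt Ω ρ p.1 p.2 x then
    normalVec h.choose.1 h.choose.2 x
  else 0

/-- A canonical selection of the reflector map `𝒩_σ(x)`; at every point with a unique
supporting ellipsoid (a.e. point) this is the target point the ray `x` is reflected to. -/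
noncomputable def reflMapSel (Ω D : Set E3) (ρ : E3 → ℝ) (x : E3) : E3 :=
  if h : ∃ p : E3 × ℝ, p.1 ∈ D ∧ IsSupportingAt Ω ρ p.1 p.2 x then h.choose.1 else 0

/-- The reflector measure `μ(E) = ∫_{τ_σ(E)} f(x) (x·ν(x))/ρ(x)² dx`,
the irradiance received on `E ⊆ D`. -/
noncomputable def reflMeasure (Ω D : Set E3) (ρ f : E3 → ℝ) (E : Set E3) : ℝ :=
  ∫ x in tracing Ω ρ E, f x * rinner x (nuSel Ω D ρ x) / ρ x ^ 2 ∂μH[2]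


/-! Every point `ρ(y)y` of a reflector in `A(δ)` lies on a supporting ellipsoid `E_d(P)` with
`d ≥ δM ≥ δ·OP`, whose eccentricity `ε = c_{d/OP}` is therefore at most `c_δ`. Over the unit
sphere the polar radius `d/(1 − ε x·m)` of that ellipsoid ranges between `d/(1 + ε)` and
`d/(1 − ε)`, so `ρ(x) ≤ ρ_d(x) ≤ ((1 + ε)/(1 − ε)) ρ_d(y) = ((1 + ε)/(1 − ε)) ρ(y)`. -/

lemma cconst_pos (t : ℝ) : 0 < cconst t := by
  have : t < Real.sqrt (1 + t ^ 2) := by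
    nlinarith [Real.sq_sqrt (show (0 : ℝ) ≤ 1 + t ^ 2 by positivity),
      Real.sqrt_nonneg (1 + t ^ 2)]
  rw [cconst]
  linarith

lemma cconst_lt_one {t : ℝ} (ht : 0 < t) : cconst t < 1 := by
  have : Real.sqrt (1 + t ^ 2) < 1 + t := by
    nlinarith [Real.sq_sqrt (show (0 : ℝ) ≤ 1 + t ^ 2 by positivity),
      Real.sqrt_nonneg (1 + t ^ 2)]
  rw [cconst]
  linarith

lemma cconst_antitone : Antitone cconst := by
  intro a b hab
  have ha := Real.sq_sqrt (show (0 : ℝ) ≤ 1 + a ^ 2 by positivity)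
  have hb := Real.sq_sqrt (show (0 : ℝ) ≤ 1 + b ^ 2 by positivity)
  have hsum : 0 < Real.sqrt (1 + a ^ 2) + Real.sqrt (1 + b ^ 2) := by positivity
  -- `√(1 + b²) − √(1 + a²) = (b − a)(b + a)/(√(1 + a²) + √(1 + b²))` and `b + a` is smaller
  -- than that denominator.
  have hab' : a + b ≤ Real.sqrt (1 + a ^ 2) + Real.sqrt (1 + b ^ 2) := by
    have := cconst_pos a; have := cconst_pos b
    rw [cconst] at *
    linarith
  rw [cconst, cconst]
  nlinarith [mul_le_mul_of_nonneg_left hab' (sub_nonneg.2 hab)]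

lemma ecc_eq_cconst (P : E3) (d : ℝ) : ecc P d = cconst (d / ‖P‖) := by
  rw [ecc, cconst, div_pow]

lemma ecc_pos (P : E3) (d : ℝ) : 0 < ecc P d :=
  ecc_eq_cconst P d ▸ cconst_pos _

lemma norm_axisDir_le_one (P : E3) : ‖axisDir P‖ ≤ 1 := by
  rw [axisDir, norm_smul, norm_inv, norm_norm]
  exact inv_mul_le_one_of_le₀ le_rfl (norm_nonneg P)

lemma abs_rinner_axisDir_le_one {x : E3} (hx : ‖x‖ ≤ 1) (P : E3) :
    |rinner x (axisDir P)| ≤ 1 :=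
  (abs_real_inner_le_norm x _).trans
    (mul_le_one₀ hx (norm_nonneg _) (norm_axisDir_le_one P))

section PolarRadius

variable {P x : E3} {d : ℝ}

lemma polarRadius_le_div_one_sub_ecc (hd : 0 ≤ d) (he : ecc P d < 1) (hx : ‖x‖ ≤ 1) :
    polarRadius P d x ≤ d / (1 - ecc P d) := by
  have hr := (abs_le.1 (abs_rinner_axisDir_le_one hx P)).2
  apply div_le_div_of_nonneg_left hd (by linarith)
  nlinarith [ecc_pos P d]

lemma div_one_add_ecc_le_polarRadius (hd : 0 ≤ d) (he : ecc P d < 1) (hx : ‖x‖ ≤ 1) :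
    d / (1 + ecc P d) ≤ polarRadius P d x := by
  have hr := abs_le.1 (abs_rinner_axisDir_le_one hx P)
  have := ecc_pos P d
  apply div_le_div_of_nonneg_left hd <;> nlinarith

lemma polarRadius_le_mul_polarRadius {y : E3} (hd : 0 ≤ d) (he : ecc P d < 1)
    (hx : ‖x‖ ≤ 1) (hy : ‖y‖ ≤ 1) :
    polarRadius P d x ≤ (1 + ecc P d) / (1 - ecc P d) * polarRadius P d y := by
  have := ecc_pos P d
  calc polarRadius P d x ≤ d / (1 - ecc P d) := polarRadius_le_div_one_sub_ecc hd he hx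
    _ = (1 + ecc P d) / (1 - ecc P d) * (d / (1 + ecc P d)) := by
        field_simp [show 1 - ecc P d ≠ 0 by linarith]
    _ ≤ (1 + ecc P d) / (1 - ecc P d) * polarRadius P d y := by
        have : 0 < 1 - ecc P d := by linarith
        gcongr
        exact div_one_add_ecc_le_polarRadius hd he hy

end PolarRadius

theorem classA_harnack_general
    (Ω : Set E3) (hΩ : Ω ⊆ sphere2)
    (D : Set E3)
    (M : ℝ) (hM : IsGreatest ((fun p : E3 => ‖p‖) '' D) M)
    (δ : ℝ) (hδ : 0 < δ)
    (ρ : E3 → ℝ) (hσ : InClassA Ω D ρ δ M) :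
    ∀ x ∈ closure Ω, ∀ y ∈ closure Ω,
      ρ x ≤ (1 + cconst δ) / (1 - cconst δ) * ρ y := by
  intro x hx y hy
  obtain ⟨P, hP, d, hdM, hP0, hd, hle, heq⟩ := hσ.2 y hy
  have hunit : ∀ z ∈ closure Ω, ‖z‖ ≤ 1 := fun z hz =>
    (mem_sphere_zero_iff_norm.1 (closure_minimal hΩ isClosed_sphere hz)).le
  have hδd : δ ≤ d / ‖P‖ := by
    rw [le_div_iff₀ (norm_pos_iff.2 hP0)]
    exact (mul_le_mul_of_nonneg_left (hM.2 ⟨P, hP, rfl⟩) hδ.le).trans hdM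
  have hec : ecc P d ≤ cconst δ := ecc_eq_cconst P d ▸ cconst_antitone hδd
  have hc1 := cconst_lt_one hδ
  calc ρ x ≤ polarRadius P d x := hle x hx
    _ ≤ (1 + ecc P d) / (1 - ecc P d) * polarRadius P d y :=
        polarRadius_le_mul_polarRadius hd.le (hec.trans_lt hc1) (hunit x hx) (hunit y hy)
    _ ≤ (1 + cconst δ) / (1 - cconst δ) * polarRadius P d y := by
        have : 0 < 1 - cconst δ := by linarith
        have : 0 ≤ polarRadius P d y := heq ▸ hσ.1.1 y hy |>.le
        gcongr
        linarith [cconst_pos δ]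
    _ = (1 + cconst δ) / (1 - cconst δ) * ρ y := by rw [heq]

/-- Harnack-type inequality for reflectors in the class `A(δ)`:
`sup ρ ≤ ((1 + c_δ)/(1 − c_δ)) inf ρ`, stated pointwise. -/
theorem classA_harnack
    (Ω : Set E3) (hΩ : Ω ⊆ sphere2) (hfr : μH[2] (sphFrontier Ω) = 0)
    (D : Set E3) (hD : IsCompact D) (hO : (0 : E3) ∉ D)
    (M : ℝ) (hM : IsGreatest ((fun p : E3 => ‖p‖) '' D) M)
    (δ : ℝ) (hδ : 0 < δ)
    (ρ : E3 → ℝ) (hσ : InClassA Ω D ρ δ M) :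
    ∀ x ∈ closure Ω, ∀ y ∈ closure Ω,
      ρ x ≤ (1 + cconst δ) / (1 - cconst δ) * ρ y :=
  classA_harnack_general Ω hΩ D M hM δ hδ ρ hσ
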